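/- Let G be a simple connected graph with diameter 2 and let x be a vertex of G. Let p be a pebble distribution on G of size m with m ≥ 5. If x is not reachable from p, then G has at least ⌊((m − 5)² + 3)/2⌋ vertices. -/

import Mathlib

open Finset

variable {V : Type*}

/-- A pebbling move: remove two pebbles at a vertex `v` and add one pebble at an
adjacent vertex `u`. -/
def IsPebblingMove (G : SimpleGraph V) (p p' : V → ℕ) : Prop :=
  ∃ v u, G.Adj v u ∧ 2 ≤ p v ∧
    p' v = p v - 2 ∧ p' u = p u + 1 ∧ ∀ z, z ≠ v → z ≠ u → p' z = p z

/-- A strict rubbling move: remove one pebble each at distinct vertices `v` and `w`,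
both adjacent to `u`, and add one pebble at `u`. -/
def IsStrictRubblingMove (G : SimpleGraph V) (p p' : V → ℕ) : Prop :=
  ∃ v w u, v ≠ w ∧ G.Adj v u ∧ G.Adj w u ∧ 1 ≤ p v ∧ 1 ≤ p w ∧
    p' v = p v - 1 ∧ p' w = p w - 1 ∧ p' u = p u + 1 ∧
    ∀ z, z ≠ v → z ≠ w → z ≠ u → p' z = p z

/-- A rubbling move is a pebbling move or a strict rubbling move. -/
def IsRubblingMove (G : SimpleGraph V) (p p' : V → ℕ) : Prop :=
  IsPebblingMove G p p' ∨ IsStrictRubblingMove G p p'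

/-- A vertex `x` is reachable from the pebble distribution `p` if some executable
sequence of rubbling moves leads to a distribution with a pebble on `x`. -/
def RubblingReachable (G : SimpleGraph V) (p : V → ℕ) (x : V) : Prop :=
  ∃ q : V → ℕ, Relation.ReflTransGen (IsRubblingMove G) p q ∧ 1 ≤ q x

/-- The rubbling number: the least `m` such that every vertex is reachable from
every pebble distribution of size `m`. -/
noncomputable def rubblingNumber (G : SimpleGraph V) [Fintype V] : ℕ :=
  sInf {m | ∀ p : V → ℕ, ∑ v, p v = m → ∀ x, RubblingReachable G p x}

/-- The optimal rubbling number: the least size of a pebble distribution from which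
every vertex is reachable. -/
noncomputable def optimalRubblingNumber (G : SimpleGraph V) [Fintype V] : ℕ :=
  sInf {m | ∃ p : V → ℕ, ∑ v, p v = m ∧ ∀ x, RubblingReachable G p x}

/-!
Two pebbles next to `x`, on one neighbour or on two, reach `x` in one move, and rubbling is
additive: move sequences from disjoint parts of a distribution can run side by side. Let `A` be
the set of vertices far from `x` holding exactly one pebble. The pebbles not on `A` number at
most three, and if there are any they can put a pebble next to `x` by themselves; if there are
none, drop from `A` a set of at most five vertices that can. Either way `|A| ≥ m - 5` and no five
vertices of `A`, one pebble each, can put a pebble next to `x`. Small rubbling configurations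
then show that no two vertices of `A` share a neighbour that is adjacent to `x` or lies in `A`,
that a vertex far from `x` sees at most three vertices of `A`, and that two vertices seeing three
each never share exactly one. So the adjacent pairs in `A` form a matching, every other pair has
a common neighbour outside `{x} ∪ N(x) ∪ A`, and these common neighbours cover at most one pair
each plus `|A|` pairs in all. With `|N(x)| ≥ |A|` this gives `|A|² + 2 ≤ 2|V|`.
-/

section PairCover

variable {ι α : Type*} [DecidableEq ι] [DecidableEq α]

lemma card_biUnion_powersetCard_two_le_of_card_eq_three (s : Finset ι) (f : ι → Finset α)
    (h3 : ∀ i ∈ s, #(f i) = 3) (h1 : ∀ i ∈ s, ∀ j ∈ s, #(f i ∩ f j) ≠ 1) :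
    #(s.biUnion fun i => (f i).powersetCard 2) ≤ #s + #(s.biUnion f) := by
  induction s using Finset.induction_on with
  | empty => simp
  | @insert i s hi ih =>
    rw [biUnion_insert, biUnion_insert, card_insert_of_notMem hi]
    set cov := s.biUnion fun i => (f i).powersetCard 2
    set supp := s.biUnion f
    have hfi : #(f i) = 3 := h3 i (mem_insert_self i s)
    -- an old point of `f i` shares a second point of `f i` with an old triple
    have hcover : f i ∩ supp ⊆ ((f i).powersetCard 2 ∩ cov).biUnion id := by
      intro v hv
      obtain ⟨hvi, hvs⟩ := mem_inter.1 hv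
      obtain ⟨j, hj, hvj⟩ := mem_biUnion.1 hvs
      have : 1 < #(f i ∩ f j) := by
        have := h1 i (mem_insert_self i s) j (mem_insert_of_mem hj)
        have := card_pos.2 ⟨v, mem_inter.2 ⟨hvi, hvj⟩⟩
        omega
      obtain ⟨w, hw, hwv⟩ := exists_mem_ne this v
      have hvw : #{v, w} = 2 := card_pair hwv.symm
      refine mem_biUnion.2 ⟨{v, w}, mem_inter.2 ⟨mem_powersetCard.2 ⟨?_, hvw⟩,
        mem_biUnion.2 ⟨j, hj, mem_powersetCard.2 ⟨?_, hvw⟩⟩⟩, by simp⟩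
      · exact insert_subset hvi (singleton_subset_iff.2 (mem_inter.1 hw).1)
      · exact insert_subset hvj (singleton_subset_iff.2 (mem_inter.1 hw).2)
    have hold : #(f i ∩ supp) ≤ 2 * #((f i).powersetCard 2 ∩ cov) :=
      calc #(f i ∩ supp) ≤ ∑ P ∈ (f i).powersetCard 2 ∩ cov, #(id P) :=
            (card_le_card hcover).trans card_biUnion_le
        _ = ∑ P ∈ (f i).powersetCard 2 ∩ cov, 2 :=
          sum_congr rfl fun P hP => (mem_powersetCard.1 (mem_inter.1 hP).1).2
        _ = 2 * #((f i).powersetCard 2 ∩ cov) := by rw [sum_const, smul_eq_mul, mul_comm]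
    have ih' := ih (fun j hj => h3 j (mem_insert_of_mem hj))
      fun j hj k hk => h1 j (mem_insert_of_mem hj) k (mem_insert_of_mem hk)
    have hpairs : #((f i).powersetCard 2) = 3 := by rw [card_powersetCard, hfi]; rfl
    have := card_union_add_card_inter ((f i).powersetCard 2) cov
    have := card_union_add_card_inter (f i) supp
    have := card_le_card (inter_subset_left (s₁ := f i) (s₂ := supp))
    omega

lemma card_biUnion_powersetCard_two_le (s : Finset ι) (f : ι → Finset α)
    (h3 : ∀ i ∈ s, #(f i) ≤ 3)
    (h1 : ∀ i ∈ s, ∀ j ∈ s, #(f i) = 3 → #(f j) = 3 → #(f i ∩ f j) ≠ 1) :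
    #(s.biUnion fun i => (f i).powersetCard 2) ≤ #s + #(s.biUnion f) := by
  set t := {i ∈ s | #(f i) = 3}
  set t' := {i ∈ s | ¬ #(f i) = 3}
  have htriples := card_biUnion_powersetCard_two_le_of_card_eq_three t f
    (fun i hi => (mem_filter.1 hi).2) fun i hi j hj =>
      h1 i (mem_filter.1 hi).1 j (mem_filter.1 hj).1 (mem_filter.1 hi).2 (mem_filter.1 hj).2
  have hsmall : #(t'.biUnion fun i => (f i).powersetCard 2) ≤ #t' :=
    calc #(t'.biUnion fun i => (f i).powersetCard 2)
        ≤ ∑ i ∈ t', #((f i).powersetCard 2) := card_biUnion_le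
      _ ≤ ∑ i ∈ t', 1 := sum_le_sum fun i hi => by
          have := mem_filter.1 hi
          rw [card_powersetCard]
          exact Nat.choose_le_choose 2 (show #(f i) ≤ 2 by have := h3 i this.1; omega)
      _ = #t' := by simp
  have hsupp : #(t.biUnion f) ≤ #(s.biUnion f) :=
    card_le_card (biUnion_subset_biUnion_of_subset_left _ (filter_subset _ _))
  have hs : s.biUnion (fun i => (f i).powersetCard 2) =
      t.biUnion (fun i => (f i).powersetCard 2) ∪ t'.biUnion fun i => (f i).powersetCard 2 := by
    rw [← union_biUnion, filter_union_filter_not_eq]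
  have : #t + #t' = #s := card_filter_add_card_filter_not _
  rw [hs]
  exact (card_union_le _ _).trans (by omega)

end PairCover

section

open Relation SimpleGraph

variable {G : SimpleGraph V} {p q r₁ r₂ : V → ℕ} {x u v w : V}

lemma SimpleGraph.exists_adj_adj_of_ediam_le_two (hG : G.ediam ≤ 2) (huv : u ≠ v)
    (h : ¬ G.Adj u v) : ∃ w, G.Adj u w ∧ G.Adj w v := by
  have : ¬ 2 < G.edist u v := not_lt.2 (G.edist_le_ediam.trans hG)
  rw [two_lt_edist_iff] at this
  obtain ⟨w, hw⟩ := Set.nonempty_iff_ne_empty.2 fun h' => this ⟨huv, h, h'⟩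
  exact ⟨w, hw.1, hw.2.symm⟩

lemma card_le_card_neighborFinset [Fintype V] [DecidableRel G.Adj] {A : Finset V}
    (hG : G.ediam ≤ 2) (hA : ∀ a ∈ A, a ≠ x ∧ ¬ G.Adj a x)
    (h₁ : ∀ y, G.Adj y x → #{a ∈ A | G.Adj y a} ≤ 1) : #A ≤ #(G.neighborFinset x) := by
  refine card_le_card_of_forall_subsingleton (fun a y => G.Adj a y) (fun a ha => ?_)
    fun y hy a ha b hb => card_le_one.1 (h₁ y ((G.mem_neighborFinset x y).1 hy).symm) a
      (mem_filter.2 ⟨ha.1, ha.2.symm⟩) b (mem_filter.2 ⟨hb.1, hb.2.symm⟩)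
  obtain ⟨y, hay, hyx⟩ := G.exists_adj_adj_of_ediam_le_two hG (hA a ha).1 (hA a ha).2
  exact ⟨y, (G.mem_neighborFinset x y).2 hyx.symm, hay⟩

lemma IsRubblingMove.add_right (h : IsRubblingMove G p q) (r : V → ℕ) :
    IsRubblingMove G (p + r) (q + r) := by
  rcases h with ⟨v, u, hvu, hv, hqv, hqu, hq⟩ |
    ⟨v, w, u, hvw, hvu, hwu, hv, hw, hqv, hqw, hqu, hq⟩
  · refine .inl ⟨v, u, hvu, ?_, ?_, ?_, fun z hzv hzu => ?_⟩ <;> simp [*] <;> omega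
  · refine .inr ⟨v, w, u, hvw, hvu, hwu, ?_, ?_, ?_, ?_, ?_, fun z hzv hzw hzu => ?_⟩ <;>
      simp [*] <;> omega

lemma reflTransGen_isRubblingMove_add {p' q' : V → ℕ} (h : ReflTransGen (IsRubblingMove G) p q)
    (h' : ReflTransGen (IsRubblingMove G) p' q') :
    ReflTransGen (IsRubblingMove G) (p + p') (q + q') :=
  (h.lift (· + p') fun _ _ hm => hm.add_right p').trans <| by
    simpa only [add_comm q] using h'.lift (· + q) fun _ _ hm => hm.add_right q

lemma RubblingReachable.mono (h : RubblingReachable G p x) (hpq : p ≤ q) :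
    RubblingReachable G q x := by
  obtain ⟨r, hr, hrx⟩ := h
  refine ⟨r + (q - p), ?_, hrx.trans (Nat.le_add_right _ _)⟩
  have h := reflTransGen_isRubblingMove_add hr (ReflTransGen.refl (a := q - p))
  rwa [add_tsub_cancel_of_le hpq] at h

variable [DecidableEq V]

lemma Pi.single_le_iff {k : ℕ} : Pi.single u k ≤ p ↔ k ≤ p u := by
  refine ⟨fun h => by simpa using h u, fun h z => ?_⟩
  rcases eq_or_ne z u with rfl | hz <;> simp [*]

lemma rubblingReachable_single : RubblingReachable G (Pi.single u 1) u :=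
  ⟨_, .refl, by simp⟩

lemma rubblingReachable_single_add_single (hu : G.Adj u w) (hv : G.Adj v w) :
    RubblingReachable G (Pi.single u 1 + Pi.single v 1) w := by
  refine ⟨Pi.single w 1, .single ?_, by simp⟩
  rcases eq_or_ne u v with rfl | huv
  · exact .inl ⟨u, w, hu, by simp, by simp [hu.ne'], by simp [hu.ne'],
      fun z hzu hzw => by simp [hzu, hzw]⟩
  · exact .inr ⟨u, v, w, huv, hu, hv, by simp, by simp [huv.symm], by simp [huv, hu.ne'],
      by simp [huv.symm, hv.ne'], by simp [hu.ne', hv.ne'], fun z hzu hzv hzw => by simp [*]⟩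

lemma RubblingReachable.add (h₁ : RubblingReachable G r₁ u) (h₂ : RubblingReachable G r₂ v)
    (h : RubblingReachable G (Pi.single u 1 + Pi.single v 1) w) :
    RubblingReachable G (r₁ + r₂) w := by
  obtain ⟨q₁, hq₁, hu⟩ := h₁
  obtain ⟨q₂, hq₂, hv⟩ := h₂
  obtain ⟨q, hq, hw⟩ := h.mono (add_le_add (Pi.single_le_iff.2 hu) (Pi.single_le_iff.2 hv))
  exact ⟨q, (reflTransGen_isRubblingMove_add hq₁ hq₂).trans hq, hw⟩

lemma rubblingReachable_sum_single_of_card_eq_two {P : Finset V} (hP : #P = 2)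
    (hadj : ∀ a ∈ P, G.Adj a w) : RubblingReachable G (∑ a ∈ P, Pi.single a 1) w := by
  obtain ⟨a, b, hab, rfl⟩ := card_eq_two.1 hP
  rw [sum_pair hab]
  exact rubblingReachable_single_add_single (hadj a (by simp)) (hadj b (by simp))

def ReachesNeighbor (G : SimpleGraph V) (p : V → ℕ) (x : V) : Prop :=
  ∃ y, G.Adj y x ∧ RubblingReachable G p y

lemma rubblingReachable_of_reachesNeighbor (h₁ : ReachesNeighbor G r₁ x)
    (h₂ : ReachesNeighbor G r₂ x) (h : r₁ + r₂ ≤ p) : RubblingReachable G p x := by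
  obtain ⟨y₁, hy₁, h₁⟩ := h₁
  obtain ⟨y₂, hy₂, h₂⟩ := h₂
  exact (h₁.add h₂ (rubblingReachable_single_add_single hy₁ hy₂)).mono h

def Starves (G : SimpleGraph V) (x : V) (A : Finset V) : Prop :=
  ∀ S ⊆ A, #S ≤ 5 → ¬ ReachesNeighbor G (∑ s ∈ S, Pi.single s 1) x

namespace Starves

variable [DecidableRel G.Adj] {A : Finset V}

lemma card_filter_adj_le_one_of_adj (h : Starves G x A) (hv : G.Adj v x) :
    #{a ∈ A | G.Adj v a} ≤ 1 := by
  by_contra! hlt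
  obtain ⟨P, hPA, hP⟩ := exists_subset_card_eq hlt
  refine h P (hPA.trans (filter_subset _ _)) (by omega) ⟨v, hv, ?_⟩
  exact rubblingReachable_sum_single_of_card_eq_two hP fun a ha => (mem_filter.1 (hPA ha)).2.symm

lemma card_filter_adj_le_one (h : Starves G x A) (hG : G.ediam ≤ 2) (hv : v ≠ x)
    (hvx : ¬ G.Adj v x) (hvA : v ∈ A) : #{a ∈ A | G.Adj v a} ≤ 1 := by
  by_contra! hlt
  obtain ⟨P, hPA, hP⟩ := exists_subset_card_eq hlt
  have hPadj : ∀ a ∈ P, G.Adj a v := fun a ha => (mem_filter.1 (hPA ha)).2.symm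
  have hvP : v ∉ P := fun hv => G.irrefl (hPadj v hv)
  obtain ⟨y, hvy, hyx⟩ := G.exists_adj_adj_of_ediam_le_two hG hv hvx
  refine h (insert v P) (insert_subset hvA (hPA.trans (filter_subset _ _)))
    ((card_insert_le _ _).trans (by omega)) ⟨y, hyx, ?_⟩
  rw [sum_insert hvP]
  exact rubblingReachable_single.add (rubblingReachable_sum_single_of_card_eq_two hP hPadj)
    (rubblingReachable_single_add_single hvy hvy)

lemma card_filter_adj_le_three (h : Starves G x A) (hG : G.ediam ≤ 2) (hv : v ≠ x)
    (hvx : ¬ G.Adj v x) : #{a ∈ A | G.Adj v a} ≤ 3 := by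
  by_contra! hlt
  obtain ⟨T, hTA, hT⟩ := exists_subset_card_eq hlt
  obtain ⟨P, hPT, hP⟩ := exists_subset_card_eq (show 2 ≤ #T by omega)
  have hadj : ∀ a ∈ T, G.Adj a v := fun a ha => (mem_filter.1 (hTA ha)).2.symm
  obtain ⟨y, hvy, hyx⟩ := G.exists_adj_adj_of_ediam_le_two hG hv hvx
  refine h T (hTA.trans (filter_subset _ _)) (by omega) ⟨y, hyx, ?_⟩
  rw [← sum_sdiff hPT]
  exact (rubblingReachable_sum_single_of_card_eq_two (by rw [card_sdiff_of_subset hPT]; omega)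
    fun a ha => hadj a (mem_sdiff.1 ha).1).add
    (rubblingReachable_sum_single_of_card_eq_two hP fun a ha => hadj a (hPT ha))
    (rubblingReachable_single_add_single hvy hvy)

lemma card_inter_ne_one (h : Starves G x A) (hG : G.ediam ≤ 2)
    (hA : ∀ a ∈ A, a ≠ x ∧ ¬ G.Adj a x) (hu : #{a ∈ A | G.Adj u a} = 3)
    (hv : #{a ∈ A | G.Adj v a} = 3) : #({a ∈ A | G.Adj u a} ∩ {a ∈ A | G.Adj v a}) ≠ 1 := by
  intro h1
  obtain ⟨c, hc⟩ := card_eq_one.1 h1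
  have hcu : c ∈ {a ∈ A | G.Adj u a} := (mem_inter.1 (hc ▸ mem_singleton_self c)).1
  have hcv : c ∈ {a ∈ A | G.Adj v a} := (mem_inter.1 (hc ▸ mem_singleton_self c)).2
  set P := {a ∈ A | G.Adj u a}.erase c
  set Q := {a ∈ A | G.Adj v a}.erase c
  have hPQ : Disjoint P Q := by
    refine disjoint_left.2 fun a haP haQ => ?_
    have : a ∈ ({c} : Finset V) := hc ▸ mem_inter.2 ⟨mem_of_mem_erase haP, mem_of_mem_erase haQ⟩
    exact ne_of_mem_erase haP (mem_singleton.1 this)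
  have hcPQ : c ∉ P ∪ Q := by simp [P, Q]
  have hcA : c ∈ A := (mem_filter.1 hcu).1
  obtain ⟨y, hcy, hyx⟩ := G.exists_adj_adj_of_ediam_le_two hG (hA c hcA).1 (hA c hcA).2
  refine h (insert c (P ∪ Q)) ?_ ?_ ⟨y, hyx, ?_⟩
  · refine insert_subset hcA (union_subset ?_ ?_) <;>
      exact (erase_subset _ _).trans (filter_subset _ _)
  · have := card_union_le P Q
    have := card_insert_le c (P ∪ Q)
    simp only [P, Q, card_erase_of_mem hcu, card_erase_of_mem hcv, hu, hv] at *
    omega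
  · rw [sum_insert hcPQ, sum_union hPQ]
    refine rubblingReachable_single.add ((rubblingReachable_sum_single_of_card_eq_two ?_ ?_).add
      (rubblingReachable_sum_single_of_card_eq_two ?_ ?_)
      (rubblingReachable_single_add_single (mem_filter.1 hcu).2 (mem_filter.1 hcv).2))
      (rubblingReachable_single_add_single hcy hcy)
    · rw [card_erase_of_mem hcu, hu]
    · exact fun a ha => (mem_filter.1 (mem_of_mem_erase ha)).2.symm
    · rw [card_erase_of_mem hcv, hv]
    · exact fun a ha => (mem_filter.1 (mem_of_mem_erase ha)).2.symm

end Starves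

section Counting

variable [DecidableRel G.Adj]

lemma two_mul_card_filter_isClique_le {A : Finset V} (hA : ∀ a ∈ A, #{b ∈ A | G.Adj a b} ≤ 1) :
    2 * #((A.powersetCard 2).filter fun e : Finset V => G.IsClique (e : Set V)) ≤ #A := by
  set E := (A.powersetCard 2).filter fun e : Finset V => G.IsClique (e : Set V)
  have hpair : ∀ a, ∀ e ∈ E, a ∈ e → ∃ b ∈ {b ∈ A | G.Adj a b}, e = {a, b} := by
    intro a e he hae
    obtain ⟨heA, he2⟩ := mem_powersetCard.1 (mem_filter.1 he).1
    obtain ⟨b, hb, hba⟩ := exists_mem_ne (show 1 < #e by omega) a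
    refine ⟨b, mem_filter.2 ⟨heA hb, (mem_filter.1 he).2 hae hb hba.symm⟩, ?_⟩
    exact (eq_of_subset_of_card_le (insert_subset hae (singleton_subset_iff.2 hb))
      (by rw [he2, card_pair hba.symm])).symm
  have := card_mul_le_card_mul (s := E) (t := A) (m := 2) (n := 1) (fun e a => a ∈ e)
    (fun e he => by
      obtain ⟨heA, he2⟩ := mem_powersetCard.1 (mem_filter.1 he).1
      rw [bipartiteAbove, filter_mem_eq_inter, inter_eq_right.2 heA, he2])
    fun a ha => card_le_one.2 fun e₁ he₁ e₂ he₂ => by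
      obtain ⟨b₁, hb₁, rfl⟩ := hpair a e₁ (mem_filter.1 he₁).1 (mem_filter.1 he₁).2
      obtain ⟨b₂, hb₂, rfl⟩ := hpair a e₂ (mem_filter.1 he₂).1 (mem_filter.1 he₂).2
      rw [card_le_one.1 (hA a ha) b₁ hb₁ b₂ hb₂]
  omega

variable [Fintype V] {A : Finset V}

lemma filter_not_isClique_subset_biUnion (hG : G.ediam ≤ 2) (hA : ∀ a ∈ A, a ≠ x ∧ ¬ G.Adj a x)
    (h₁ : ∀ y, G.Adj y x → #{a ∈ A | G.Adj y a} ≤ 1)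
    (h₂ : ∀ s ∈ A, #{a ∈ A | G.Adj s a} ≤ 1) :
    (A.powersetCard 2).filter (fun e : Finset V => ¬ G.IsClique (e : Set V)) ⊆
      (univ \ insert x (G.neighborFinset x ∪ A)).biUnion
        fun z => {a ∈ A | G.Adj z a}.powersetCard 2 := by
  intro e he
  obtain ⟨he, hne⟩ := mem_filter.1 he
  obtain ⟨heA, he2⟩ := mem_powersetCard.1 he
  obtain ⟨a, b, hab, rfl⟩ := card_eq_two.1 he2
  rw [coe_pair, isClique_pair] at hne
  obtain ⟨w, haw, hwb⟩ := G.exists_adj_adj_of_ediam_le_two hG hab fun h => hne fun _ => h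
  have haA : a ∈ A := heA (by simp)
  have hab' : a ∈ {c ∈ A | G.Adj w c} ∧ b ∈ {c ∈ A | G.Adj w c} :=
    ⟨mem_filter.2 ⟨haA, haw.symm⟩, mem_filter.2 ⟨heA (by simp), hwb⟩⟩
  refine mem_biUnion.2 ⟨w, ?_, mem_powersetCard.2
    ⟨insert_subset hab'.1 (singleton_subset_iff.2 hab'.2), card_pair hab⟩⟩
  simp only [mem_sdiff, mem_univ, mem_insert, mem_union, mem_neighborFinset, not_or, true_and]
  refine ⟨fun hwx => (hA a haA).2 (hwx ▸ haw), fun hxw => hab ?_, fun hwA => hab ?_⟩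
  · exact card_le_one.1 (h₁ w hxw.symm) a hab'.1 b hab'.2
  · exact card_le_one.1 (h₂ w hwA) a hab'.1 b hab'.2

theorem sq_card_add_two_le_two_mul_card (hG : G.ediam ≤ 2)
    (hA : ∀ a ∈ A, a ≠ x ∧ ¬ G.Adj a x)
    (h₁ : ∀ y, G.Adj y x → #{a ∈ A | G.Adj y a} ≤ 1)
    (h₂ : ∀ s ∈ A, #{a ∈ A | G.Adj s a} ≤ 1)
    (h₃ : ∀ z, z ≠ x → ¬ G.Adj z x → #{a ∈ A | G.Adj z a} ≤ 3)
    (h₄ : ∀ u v, #{a ∈ A | G.Adj u a} = 3 → #{a ∈ A | G.Adj v a} = 3 →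
      #({a ∈ A | G.Adj u a} ∩ {a ∈ A | G.Adj v a}) ≠ 1) :
    #A ^ 2 + 2 ≤ 2 * Fintype.card V := by
  set N := G.neighborFinset x
  set R := univ \ insert x (N ∪ A)
  have hNA : Disjoint N A :=
    disjoint_left.2 fun v hv hvA => (hA v hvA).2 ((G.mem_neighborFinset x v).1 hv).symm
  have hxNA : x ∉ N ∪ A := by
    simp only [mem_union, not_or]
    exact ⟨by simp [N], fun h => (hA x h).1 rfl⟩
  have hcardV : #R + #(insert x (N ∪ A)) = Fintype.card V :=
    card_sdiff_add_card_eq_card (subset_univ _)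
  rw [card_insert_of_notMem hxNA, card_union_of_disjoint hNA] at hcardV
  have hmemR : ∀ z ∈ R, z ≠ x ∧ ¬ G.Adj z x := fun z hz => by
    simp only [R, N, mem_sdiff, mem_insert, mem_union, mem_neighborFinset, not_or] at hz
    exact ⟨hz.2.1, fun h => hz.2.2.1 h.symm⟩
  have hcover := card_biUnion_powersetCard_two_le R (fun z => {a ∈ A | G.Adj z a})
    (fun z hz => h₃ z (hmemR z hz).1 (hmemR z hz).2) fun u _ v _ => h₄ u v
  have hsupp : #(R.biUnion fun z => {a ∈ A | G.Adj z a}) ≤ #A :=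
    card_le_card (biUnion_subset.2 fun _ _ => filter_subset _ _)
  have hnonadj : #((A.powersetCard 2).filter fun e : Finset V => ¬ G.IsClique (e : Set V)) ≤
      #(R.biUnion fun z => {a ∈ A | G.Adj z a}.powersetCard 2) :=
    card_le_card (filter_not_isClique_subset_biUnion hG hA h₁ h₂)
  have hadj := two_mul_card_filter_isClique_le h₂
  have hsplit := card_filter_add_card_filter_not (s := A.powersetCard 2)
    fun e : Finset V => G.IsClique (e : Set V)
  have hpairs : 2 * #(A.powersetCard 2) + #A = #A ^ 2 := by
    rw [card_powersetCard, Nat.choose_two_right,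
      Nat.mul_div_cancel' (Nat.even_mul_pred_self _).two_dvd]
    cases #A <;> simp [sq, Nat.mul_succ]
  have hAN : #A ≤ #N := card_le_card_neighborFinset hG hA h₁
  omega

end Counting

section Pebbles

lemma single_add_sum_single_le {S : Finset V} {k : ℕ} (hv : v ∉ S) (hk : k ≤ p v)
    (hS : ∀ s ∈ S, 1 ≤ p s) : Pi.single v k + ∑ s ∈ S, Pi.single s 1 ≤ p := by
  intro z
  rcases eq_or_ne z v with rfl | hz
  · simpa [Finset.sum_apply, hv] using hk
  · by_cases hzS : z ∈ S <;> simp [Finset.sum_apply, hz, hzS, hS]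

lemma sum_single_le {S : Finset V} (hS : ∀ s ∈ S, 1 ≤ p s) : ∑ s ∈ S, Pi.single s 1 ≤ p := by
  intro z
  by_cases hzS : z ∈ S <;> simp [Finset.sum_apply, hzS, hS]

lemma starves_of_reachesNeighbor {A : Finset V} (hx : ¬ RubblingReachable G p x)
    (hr : ReachesNeighbor G r₁ x) (hle : ∀ S ⊆ A, r₁ + ∑ s ∈ S, Pi.single s 1 ≤ p) :
    Starves G x A :=
  fun S hSA _ hS => hx (rubblingReachable_of_reachesNeighbor hr hS (hle S hSA))

lemma exists_reachesNeighbor_single (hG : G.ediam ≤ 2) (hvx : v ≠ x)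
    (hv : G.Adj v x ∧ 1 ≤ p v ∨ 2 ≤ p v) :
    ∃ k ≤ 2, k ≤ p v ∧ ReachesNeighbor G (Pi.single v k) x := by
  by_cases hadj : G.Adj v x
  · exact ⟨1, by omega, by omega, v, hadj, rubblingReachable_single⟩
  obtain ⟨y, hvy, hyx⟩ := G.exists_adj_adj_of_ediam_le_two hG hvx hadj
  refine ⟨2, le_rfl, by tauto, y, hyx, ?_⟩
  rw [show (2 : ℕ) = 1 + 1 from rfl, Pi.single_add]
  exact rubblingReachable_single_add_single hvy hvy

lemma exists_subset_starves_sdiff {A : Finset V} (hx : ¬ RubblingReachable G p x)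
    (hA : ∀ a ∈ A, 1 ≤ p a) : ∃ D ⊆ A, #D ≤ 5 ∧ Starves G x (A \ D) := by
  by_cases h : Starves G x A
  · exact ⟨∅, empty_subset _, by simp, by simpa using h⟩
  simp only [Starves, not_forall, not_not] at h
  obtain ⟨D, hDA, hD5, hD⟩ := h
  refine ⟨D, hDA, hD5, starves_of_reachesNeighbor hx hD fun S hS => ?_⟩
  rw [← sum_union (disjoint_left.2 fun a haD haS => (mem_sdiff.1 (hS haS)).2 haD)]
  exact sum_single_le fun s hs => hA s (union_subset hDA (hS.trans sdiff_subset) hs)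

variable [Fintype V]

lemma exists_starves_of_not_rubblingReachable (hG : G.ediam ≤ 2)
    (hx : ¬ RubblingReachable G p x) :
    ∃ A : Finset V, (∀ a ∈ A, a ≠ x ∧ ¬ G.Adj a x) ∧ Starves G x A ∧ ∑ v, p v ≤ #A + 5 := by
  classical
  set A : Finset V := {v | v ≠ x ∧ ¬ G.Adj v x ∧ p v = 1}
  have hfar : ∀ a ∈ A, a ≠ x ∧ ¬ G.Adj a x := fun a ha =>
    ⟨(mem_filter.1 ha).2.1, (mem_filter.1 ha).2.2.1⟩
  have hAp : ∀ a ∈ A, p a = 1 := fun a ha => (mem_filter.1 ha).2.2.2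
  have hsum : ∑ v, p v = #A + ∑ v ∈ Aᶜ, p v := by
    rw [← sum_add_sum_compl A p, sum_congr rfl hAp, card_eq_sum_ones]
  have hfeeder : ∀ v ∉ A, 1 ≤ p v → ∃ k ≤ 2, k ≤ p v ∧ ReachesNeighbor G (Pi.single v k) x := by
    intro v hvA hv
    have hvx : v ≠ x := fun h => hx ⟨p, .refl, h ▸ hv⟩
    refine exists_reachesNeighbor_single hG hvx ?_
    by_cases hadj : G.Adj v x
    · exact .inl ⟨hadj, hv⟩
    have : p v ≠ 1 := fun h => hvA (mem_filter.2 ⟨mem_univ v, hvx, hadj, h⟩)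
    omega
  by_cases hout : ∃ v ∉ A, 1 ≤ p v
  · obtain ⟨v, hvA, hv⟩ := hout
    obtain ⟨k, hk2, hkv, hfeed⟩ := hfeeder v hvA hv
    have hpv : p v < 2 * k := by
      by_contra! h
      refine hx (rubblingReachable_of_reachesNeighbor hfeed hfeed ?_)
      rw [← Pi.single_add, Pi.single_le_iff]
      omega
    have hrest : ∀ w ∈ Aᶜ, w ≠ v → p w = 0 := by
      intro w hwA hwv
      by_contra! h
      obtain ⟨l, -, hlw, hfeed'⟩ := hfeeder w (mem_compl.1 hwA) (by omega)
      refine hx (rubblingReachable_of_reachesNeighbor hfeed hfeed' fun z => ?_)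
      rcases eq_or_ne z v with rfl | hzv
      · simpa [hwv] using hkv
      · rcases eq_or_ne z w with rfl | hzw <;> simp [*]
    refine ⟨A, hfar, starves_of_reachesNeighbor hx hfeed fun S hSA =>
      single_add_sum_single_le (fun h => hvA (hSA h)) hkv fun s hs => (hAp s (hSA hs)).ge, ?_⟩
    rw [hsum, sum_eq_single_of_mem v (mem_compl.2 hvA) hrest]
    omega
  push Not at hout
  obtain ⟨D, hDA, hD5, hD⟩ := exists_subset_starves_sdiff hx fun a ha => (hAp a ha).ge
  refine ⟨A \ D, fun a ha => hfar a (mem_sdiff.1 ha).1, hD, ?_⟩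
  rw [hsum, sum_eq_zero fun v hv => by have := hout v (mem_compl.1 hv); omega,
    card_sdiff_of_subset hDA]
  have := card_le_card hDA
  omega

end Pebbles

end

theorem card_ge_of_not_reachable_general {V : Type*} [Fintype V] (G : SimpleGraph V)
    (hdiam : G.diam = 2) (x : V) (p : V → ℕ) (m : ℕ)
    (hm : ∑ v, p v = m) (hx : ¬ RubblingReachable G p x) :
    ((m - 5) ^ 2 + 3) / 2 ≤ Fintype.card V := by
  classical
  have hG : G.ediam ≤ 2 := by
    rw [← ENat.natCast_toNat (G.ediam_ne_top_of_diam_ne_zero (by omega))]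
    exact_mod_cast hdiam.le
  obtain ⟨A, hA, hstarve, hpA⟩ := exists_starves_of_not_rubblingReachable hG hx
  have hcard := sq_card_add_two_le_two_mul_card hG hA
    (fun y hy => hstarve.card_filter_adj_le_one_of_adj hy)
    (fun s hs => hstarve.card_filter_adj_le_one hG (hA s hs).1 (hA s hs).2 hs)
    (fun z hz hzx => hstarve.card_filter_adj_le_three hG hz hzx)
    fun u v hu hv => hstarve.card_inter_ne_one hG hA hu hv
  have : (m - 5) ^ 2 ≤ #A ^ 2 := Nat.pow_le_pow_left (by omega) 2
  omega

/-- Let `G` be a connected graph of diameter 2 with goal vertex `x`, and let `p` be a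
pebble distribution of size `m ≥ 5`.  If `x` is not reachable from `p`, then `G` has
at least `⌊((m - 5)² + 3)/2⌋` vertices. -/
theorem card_ge_of_not_reachable {V : Type*} [Fintype V] (G : SimpleGraph V)
    (hconn : G.Connected) (hdiam : G.diam = 2) (x : V) (p : V → ℕ) (m : ℕ)
    (hm : ∑ v, p v = m) (hm5 : 5 ≤ m) (hx : ¬ RubblingReachable G p x) :
    ((m - 5) ^ 2 + 3) / 2 ≤ Fintype.card V :=
  card_ge_of_not_reachable_general G hdiam x p m hm hx
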